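/- (Local complementation acts by local Clifford unitaries on graph states.) Let G be a simple graph on Fin n, let a : Fin n, and let τ_a(G) be the local complement of G at a. Then there exists a complex number c with |c| = 1 such that ψ_{τ_a(G)} = c • (U_a ψ_G), where U_a := 2^{−1/2}(id − i·X_a) ∘ ∏_{b ∈ N_G(a)} 2^{−1/2}(id + i·Z_b) (these factors pairwise commute up to the indicated composition order; the Z factors are diagonal and commute among themselves). -/

import Mathlib

open scoped BigOperators

noncomputable section

/-- The `n`-qubit state space. -/
abbrev V (n : ℕ) : Type := (Fin n → Bool) → ℂ

/-- The numeric value (0 or 1) of a bit. -/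
def bval (b : Bool) : ℕ := if b then 1 else 0

/-- A diagonal (multiplication) operator on `V n`. -/
def diagOp {n : ℕ} (g : (Fin n → Bool) → ℂ) : V n →ₗ[ℂ] V n where
  toFun f := fun v => g v * f v
  map_add' f h := by funext v; simp [mul_add]
  map_smul' c f := by funext v; simp; ring

@[simp] lemma diagOp_apply {n : ℕ} (g : (Fin n → Bool) → ℂ) (f : V n) (v : Fin n → Bool) :
    diagOp g f v = g v * f v := rfl

lemma diagOp_commute {n : ℕ} (g h : (Fin n → Bool) → ℂ) :
    Commute (diagOp g) (diagOp h) := by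
  apply LinearMap.ext; intro f; funext v
  simp [Module.End.mul_apply]; ring

/-- The Pauli `Z` operator on qubit `i`. -/
def Zop {n : ℕ} (i : Fin n) : V n →ₗ[ℂ] V n :=
  diagOp (fun v => (-1 : ℂ) ^ bval (v i))

/-- The Pauli `X` operator on qubit `i`. -/
def Xop {n : ℕ} (i : Fin n) : V n →ₗ[ℂ] V n where
  toFun f := fun v => f (Function.update v i (!(v i)))
  map_add' f h := by funext v; simp
  map_smul' c f := by funext v; simp

/-- The controlled-phase operator on qubits `i`, `j`. -/
def CZop {n : ℕ} (i j : Fin n) : V n →ₗ[ℂ] V n :=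
  diagOp (fun v => (-1 : ℂ) ^ (bval (v i) * bval (v j)))

/-- The controlled-phase operator associated to an (unordered) edge. -/
def CZe {n : ℕ} : Sym2 (Fin n) → (V n →ₗ[ℂ] V n) :=
  Sym2.lift ⟨fun i j => CZop i j, by
    intro i j
    apply LinearMap.ext; intro f; funext v
    simp [CZop, Nat.mul_comm (bval (v i))]⟩

lemma CZe_commute {n : ℕ} (e e' : Sym2 (Fin n)) : Commute (CZe e) (CZe e') := by
  induction e using Sym2.ind with
  | _ i j =>
    induction e' using Sym2.ind with
    | _ k l => simpa [CZe, CZop] using diagOp_commute _ _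

/-- The `n`-qubit plus state `|+⟩^{⊗ n}`, the constant function `2^{-n/2}`. -/
def ePlus (n : ℕ) : V n := fun _ => (((2 : ℝ) ^ (-(n : ℝ) / 2) : ℝ) : ℂ)

/-- The graph state of a simple graph `G` on `Fin n`: the product of the
controlled-phase gates over all edges of `G`, applied to the plus state. -/
def graphState {n : ℕ} (G : SimpleGraph (Fin n)) [DecidableRel G.Adj] : V n :=
  (G.edgeFinset.noncommProd CZe (fun e _ e' _ _ => CZe_commute e e')) (ePlus n)

/-- `true ∧ true` test for both endpoints of an edge, as a Boolean predicate on `Sym2`. -/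
def edgeAllTrue {n : ℕ} (v : Fin n → Bool) : Sym2 (Fin n) → Bool :=
  Sym2.lift ⟨fun i j => v i && v j, by intro i j; exact Bool.and_comm _ _⟩

/-- `m_G(v)`: the number of edges of `G` both of whose endpoints `i` satisfy `v i = true`. -/
def mG {n : ℕ} (G : SimpleGraph (Fin n)) [DecidableRel G.Adj] (v : Fin n → Bool) : ℕ :=
  (G.edgeFinset.filter (fun e => edgeAllTrue v e = true)).card

/-- The local complement `τ_a(G)` of a simple graph `G` at vertex `a`:
`x ≠ y` are adjacent iff either they are both neighbours of `a` and non-adjacent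
in `G`, or they are not both neighbours of `a` and adjacent in `G`. -/
def localComp {α : Type*} (G : SimpleGraph α) (a : α) : SimpleGraph α where
  Adj x y := x ≠ y ∧
    (((G.Adj a x ∧ G.Adj a y) ∧ ¬ G.Adj x y) ∨ (¬ (G.Adj a x ∧ G.Adj a y) ∧ G.Adj x y))
  symm := ⟨by
    intro x y ⟨hxy, h⟩
    refine ⟨hxy.symm, ?_⟩
    rcases h with h | h
    · exact Or.inl ⟨⟨h.1.2, h.1.1⟩, fun hc => h.2 hc.symm⟩
    · exact Or.inr ⟨fun hc => h.1 ⟨hc.2, hc.1⟩, h.2.symm⟩⟩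
  loopless := ⟨fun x h => h.1 rfl⟩

instance {n : ℕ} (G : SimpleGraph (Fin n)) [DecidableRel G.Adj] (a : Fin n) :
    DecidableRel (localComp G a).Adj := fun x y => by
  change Decidable (_ ∧ _); infer_instance

/-- `2^{-1/2}` as a complex number. -/
def invSqrtTwo : ℂ := (((2 : ℝ) ^ (-(1 : ℝ) / 2) : ℝ) : ℂ)

lemma zFactor_commute {n : ℕ} (b c : Fin n) :
    Commute (invSqrtTwo • (LinearMap.id + Complex.I • Zop b))
      (invSqrtTwo • (LinearMap.id + Complex.I • Zop c)) := by
  apply LinearMap.ext; intro f; funext v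
  simp [Module.End.mul_apply, Zop, smul_smul]
  ring

/-- The local Clifford unitary `U_a` implementing local complementation at `a`:
`2^{-1/2}(id - i X_a)` composed with `∏_{b ∈ N_G(a)} 2^{-1/2}(id + i Z_b)`. -/
def Ua {n : ℕ} (G : SimpleGraph (Fin n)) [DecidableRel G.Adj] (a : Fin n) :
    V n →ₗ[ℂ] V n :=
  (invSqrtTwo • (LinearMap.id - Complex.I • Xop a)) ∘ₗ
    (G.neighborFinset a).noncommProd
      (fun b => invSqrtTwo • (LinearMap.id + Complex.I • Zop b))
      (fun b _ c _ _ => zFactor_commute b c)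

section Aux
open Finset
variable {n : ℕ}

lemma invSqrtTwo_mul_self : invSqrtTwo * invSqrtTwo = 1/2 := by
  unfold invSqrtTwo
  rw [← Complex.ofReal_mul, ← Real.rpow_add (by norm_num : (0:ℝ) < 2)]
  norm_num

lemma omega_inv : (invSqrtTwo * (1 - Complex.I)) * (invSqrtTwo * (1 + Complex.I)) = 1 := by
  have h := invSqrtTwo_mul_self
  have hI := Complex.I_sq
  linear_combination 2*h - invSqrtTwo*invSqrtTwo*hI

lemma scalar_id (k : ℕ) :
    invSqrtTwo * (invSqrtTwo * (1 + Complex.I)) * (-Complex.I) ^ k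
      * (1 - Complex.I * (-1) ^ k) = (-1 : ℂ) ^ (k.choose 2) := by
  induction k with
  | zero =>
      have h := invSqrtTwo_mul_self
      have hI := Complex.I_sq
      norm_num [Nat.choose]
      linear_combination 2*h - invSqrtTwo*invSqrtTwo*hI
  | succ k ih =>
      have h1 : (k+1).choose 2 = k + k.choose 2 := by
        have := Nat.choose_succ_succ k 1
        simpa [Nat.choose_one_right] using this
      have h2 : (-1:ℂ)^k * (-1:ℂ)^k = 1 := by
        rw [← mul_pow]; norm_num
      rw [h1, pow_add, pow_succ, pow_succ]
      have hI := Complex.I_sq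
      linear_combination ((-1:ℂ)^k) * ih
        - invSqrtTwo*invSqrtTwo*(Complex.I^k)*(1+Complex.I)*(((-1:ℂ)^k)^2) * hI
        + invSqrtTwo*invSqrtTwo*(Complex.I^k)*(1+Complex.I)*((-1:ℂ)^k)*Complex.I * h2
end Aux
section Aux2
open Finset
variable {n : ℕ}

lemma diagOp_one : diagOp (fun _ : Fin n → Bool => (1:ℂ)) = 1 := by
  apply LinearMap.ext; intro f; funext v
  simp [Module.End.one_apply]

lemma diagOp_mul (g h : (Fin n → Bool) → ℂ) :
    diagOp g * diagOp h = diagOp (fun v => g v * h v) := by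
  apply LinearMap.ext; intro f; funext v
  simp [Module.End.mul_apply]; ring

lemma noncommProd_diag {ι : Type*} [DecidableEq ι] (s : Finset ι)
    (g : ι → (Fin n → Bool) → ℂ) :
    ∀ (comm : (↑s : Set ι).Pairwise (Function.onFun Commute (fun i => diagOp (g i)))),
      s.noncommProd (fun i => diagOp (g i)) comm
        = diagOp (fun v => ∏ i ∈ s, g i v) := by
  induction s using Finset.induction_on with
  | empty => intro comm; simp [Finset.noncommProd_empty, diagOp_one]
  | @insert a s ha ih =>
      intro comm
      rw [Finset.noncommProd_insert_of_notMem _ _ _ _ ha, ih, diagOp_mul]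
      congr 1
      funext v
      rw [Finset.prod_insert ha]
end Aux2
section Aux3
open Finset
variable {n : ℕ}

lemma CZe_eq_diag (e : Sym2 (Fin n)) :
    CZe e = diagOp (fun v => if edgeAllTrue v e = true then (-1:ℂ) else 1) := by
  induction e using Sym2.ind with
  | _ i j =>
    apply LinearMap.ext; intro f; funext v
    have h : ((-1:ℂ)) ^ (bval (v i) * bval (v j))
        = if edgeAllTrue v s(i,j) = true then (-1:ℂ) else 1 := by
      simp only [edgeAllTrue, Sym2.lift_mk]
      rcases Bool.dichotomy (v i) with hi | hi <;> rcases Bool.dichotomy (v j) with hj | hj <;>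
        simp [bval, hi, hj]
    simp [CZe, CZop, h]

lemma graphState_apply (G : SimpleGraph (Fin n)) [DecidableRel G.Adj] (v : Fin n → Bool) :
    graphState G v = (-1 : ℂ) ^ (mG G v) * ePlus n v := by
  classical
  unfold graphState
  erw [Finset.noncommProd_congr rfl (fun e _ => CZe_eq_diag e), noncommProd_diag]
  rw [diagOp_apply]
  congr 1
  rw [Finset.prod_ite _ _, Finset.prod_const, Finset.prod_const, one_pow, mul_one]
  rfl
end Aux3
section Aux4
open Finset
variable {n : ℕ}

/-- number of true neighbours -/
def knum (G : SimpleGraph (Fin n)) [DecidableRel G.Adj] (a : Fin n) (v : Fin n → Bool) : ℕ :=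
  ((G.neighborFinset a).filter (fun b => v b = true)).card

lemma zfac_eq_diag (b : Fin n) :
    invSqrtTwo • (LinearMap.id + Complex.I • Zop b)
      = diagOp (fun v => invSqrtTwo * (1 + Complex.I * (-1:ℂ)^(bval (v b)))) := by
  apply LinearMap.ext; intro f; funext v
  simp [Zop, LinearMap.smul_apply, LinearMap.add_apply, Pi.smul_apply, smul_eq_mul]
  ring

lemma zprod_eval (G : SimpleGraph (Fin n)) [DecidableRel G.Adj] (a : Fin n) (v : Fin n → Bool) :
    (∏ b ∈ G.neighborFinset a, (invSqrtTwo * (1 + Complex.I * (-1:ℂ)^(bval (v b)))))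
      = (invSqrtTwo * (1 + Complex.I))^(G.degree a) * (-Complex.I)^(knum G a v) := by
  classical
  have h : ∀ b ∈ G.neighborFinset a,
      invSqrtTwo * (1 + Complex.I * (-1:ℂ)^(bval (v b)))
        = (invSqrtTwo * (1 + Complex.I)) * (if v b = true then -Complex.I else 1) := by
    intro b _
    rcases Bool.dichotomy (v b) with hb | hb
    · simp [bval, hb]
    · simp [bval, hb]
      linear_combination invSqrtTwo * Complex.I_sq
  rw [Finset.prod_congr rfl h, Finset.prod_mul_distrib, Finset.prod_const,
    SimpleGraph.card_neighborFinset_eq_degree, Finset.prod_ite _ _,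
    Finset.prod_const, Finset.prod_const, one_pow, mul_one]
  rfl

lemma Ua_apply (G : SimpleGraph (Fin n)) [DecidableRel G.Adj] (a : Fin n)
    (f : V n) (v : Fin n → Bool) :
    Ua G a f v = invSqrtTwo *
      (((invSqrtTwo * (1 + Complex.I))^(G.degree a) * (-Complex.I)^(knum G a v)) * f v
        - Complex.I * (((invSqrtTwo * (1 + Complex.I))^(G.degree a)
            * (-Complex.I)^(knum G a (Function.update v a (!(v a))))) * f (Function.update v a (!(v a))))) := by
  classical
  unfold Ua
  erw [Finset.noncommProd_congr rfl (fun b _ => zfac_eq_diag b), noncommProd_diag]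
  simp only [LinearMap.comp_apply, LinearMap.smul_apply, LinearMap.sub_apply,
    LinearMap.id_apply, Pi.smul_apply, smul_eq_mul, Pi.sub_apply, diagOp_apply]
  rw [show (Xop a) ((diagOp fun w => ∏ b ∈ G.neighborFinset a,
      invSqrtTwo * (1 + Complex.I * (-1:ℂ)^(bval (w b)))) f) v
    = (∏ b ∈ G.neighborFinset a, invSqrtTwo * (1 + Complex.I * (-1:ℂ)^(bval ((Function.update v a (!(v a))) b))))
        * f (Function.update v a (!(v a))) from rfl]
  rw [zprod_eval, zprod_eval]
end Aux4
section Aux5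
open Finset
variable {n : ℕ}

lemma edgeAllTrue_update {v : Fin n → Bool} {a : Fin n} (x : Bool) (e : Sym2 (Fin n))
    (h : a ∉ e) : edgeAllTrue (Function.update v a x) e = edgeAllTrue v e := by
  induction e using Sym2.ind with
  | _ i j =>
    rw [Sym2.mem_iff] at h; push_neg at h
    simp only [edgeAllTrue, Sym2.lift_mk]
    rw [Function.update_of_ne (Ne.symm h.1), Function.update_of_ne (Ne.symm h.2)]

lemma knum_update (G : SimpleGraph (Fin n)) [DecidableRel G.Adj] (a : Fin n)
    (v : Fin n → Bool) (x : Bool) : knum G a (Function.update v a x) = knum G a v := by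
  unfold knum
  congr 1
  apply Finset.filter_congr
  intro b hb
  have hba : b ≠ a := (G.ne_of_adj ((G.mem_neighborFinset a b).mp hb)).symm
  rw [Function.update_of_ne hba]

lemma edgesAt_filter (G : SimpleGraph (Fin n)) [DecidableRel G.Adj] (a : Fin n)
    (v : Fin n → Bool) :
    G.edgeFinset.filter (fun e => edgeAllTrue v e = true ∧ a ∈ e)
      = ((G.neighborFinset a).filter (fun b => (v a && v b) = true)).image
          (fun b => s(a,b)) := by
  ext e
  induction e using Sym2.ind with
  | _ i j =>
    simp only [Finset.mem_filter]
    simp only [Finset.mem_filter, SimpleGraph.mem_edgeFinset, SimpleGraph.mem_edgeSet,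
      Finset.mem_image, SimpleGraph.mem_neighborFinset, Sym2.mem_iff, edgeAllTrue,
      Sym2.lift_mk]
    constructor
    · rintro ⟨hadj, hA, (rfl | rfl)⟩
      · exact ⟨j, ⟨hadj, hA⟩, rfl⟩
      · exact ⟨i, ⟨hadj.symm, by rwa [Bool.and_comm]⟩, Sym2.eq_swap⟩
    · rintro ⟨b, ⟨hb, hv⟩, he⟩
      rw [Sym2.eq_iff] at he
      rcases he with ⟨rfl, rfl⟩ | ⟨rfl, rfl⟩
      · exact ⟨hb, hv, Or.inl rfl⟩
      · exact ⟨hb.symm, by rwa [Bool.and_comm], Or.inr rfl⟩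

lemma card_edgesAt (G : SimpleGraph (Fin n)) [DecidableRel G.Adj] (a : Fin n)
    (v : Fin n → Bool) :
    (G.edgeFinset.filter (fun e => edgeAllTrue v e = true ∧ a ∈ e)).card
      = if v a = true then knum G a v else 0 := by
  rw [edgesAt_filter,
    Finset.card_image_of_injective _ (fun b c h => Sym2.congr_right.mp h)]
  rcases Bool.dichotomy (v a) with h | h
  · simp [h]
  · simp only [h, if_true]
    unfold knum
    congr 1

lemma mG_split (G : SimpleGraph (Fin n)) [DecidableRel G.Adj] (a : Fin n)
    (v : Fin n → Bool) :
    mG G v = (G.edgeFinset.filter (fun e => edgeAllTrue v e = true ∧ a ∉ e)).card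
      + (if v a = true then knum G a v else 0) := by
  classical
  rw [← card_edgesAt G a v]
  unfold mG
  rw [← Finset.filter_filter (fun e => edgeAllTrue v e = true) (fun e => a ∉ e),
    ← Finset.filter_filter (fun e => edgeAllTrue v e = true) (fun e => a ∈ e)]
  rw [add_comm]
  exact (Finset.card_filter_add_card_filter_not (fun e => a ∈ e)).symm

lemma mG_update_parity (G : SimpleGraph (Fin n)) [DecidableRel G.Adj] (a : Fin n)
    (v : Fin n → Bool) :
    (-1:ℂ) ^ (mG G (Function.update v a (!(v a))))
      = (-1:ℂ)^(mG G v) * (-1:ℂ)^(knum G a v) := by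
  classical
  have hc : G.edgeFinset.filter
        (fun e => edgeAllTrue (Function.update v a (!(v a))) e = true ∧ a ∉ e)
      = G.edgeFinset.filter (fun e => edgeAllTrue v e = true ∧ a ∉ e) := by
    apply Finset.filter_congr
    intro e _
    constructor
    · rintro ⟨hA, hm⟩; exact ⟨by rwa [edgeAllTrue_update _ _ hm] at hA, hm⟩
    · rintro ⟨hA, hm⟩; exact ⟨by rwa [edgeAllTrue_update _ _ hm], hm⟩
  rw [mG_split G a (Function.update v a (!(v a))), mG_split G a v, hc,
    knum_update, Function.update_self]
  have h2 : (-1:ℂ)^(knum G a v) * (-1:ℂ)^(knum G a v) = 1 := by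
    rw [← mul_pow]; norm_num
  rcases Bool.dichotomy (v a) with h | h
  · simp only [h, Bool.not_false, Bool.false_eq_true, if_true, if_false, pow_add, pow_zero]
    ring
  · simp only [h, Bool.not_true, Bool.false_eq_true, if_true, if_false, pow_add, pow_zero]
    rw [mul_assoc, h2]
end Aux5
section Aux6
open Finset
variable {n : ℕ}

def bothNbr (G : SimpleGraph (Fin n)) [DecidableRel G.Adj] (a : Fin n) :
    Sym2 (Fin n) → Bool :=
  Sym2.lift ⟨fun x y => decide (G.Adj a x) && decide (G.Adj a y),
    fun x y => Bool.and_comm _ _⟩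

lemma bothNbr_mk (G : SimpleGraph (Fin n)) [DecidableRel G.Adj] (a x y : Fin n) :
    bothNbr G a s(x,y) = true ↔ (G.Adj a x ∧ G.Adj a y) := by
  simp [bothNbr]

lemma notP_part_eq (G : SimpleGraph (Fin n)) [DecidableRel G.Adj] (a : Fin n)
    (v : Fin n → Bool) :
    (localComp G a).edgeFinset.filter
        (fun e => edgeAllTrue v e = true ∧ ¬ (bothNbr G a e = true))
      = G.edgeFinset.filter (fun e => edgeAllTrue v e = true ∧ ¬ (bothNbr G a e = true)) := by
  ext e
  induction e using Sym2.ind with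
  | _ x y =>
    simp only [Finset.mem_filter, SimpleGraph.mem_edgeFinset, SimpleGraph.mem_edgeSet,
      bothNbr_mk]
    constructor
    · rintro ⟨⟨hne, h⟩, hA, hnP⟩
      rcases h with ⟨hb, _⟩ | ⟨_, hadj⟩
      · exact absurd hb hnP
      · exact ⟨hadj, hA, hnP⟩
    · rintro ⟨hadj, hA, hnP⟩
      exact ⟨⟨G.ne_of_adj hadj, Or.inr ⟨hnP, hadj⟩⟩, hA, hnP⟩

lemma mG_localComp_parity (G : SimpleGraph (Fin n)) [DecidableRel G.Adj] (a : Fin n)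
    (v : Fin n → Bool) :
    (-1:ℂ)^(mG (localComp G a) v)
      = (-1:ℂ)^(mG G v) * (-1:ℂ)^((knum G a v).choose 2) := by
  classical
  set Sfin := (G.neighborFinset a).filter (fun b => v b = true) with hSfin
  set S' := Sfin.sym2.filter (fun e => ¬ e.IsDiag) with hS'
  have hmem : ∀ x y : Fin n, (s(x,y) ∈ S') ↔
      ((G.Adj a x ∧ v x = true) ∧ (G.Adj a y ∧ v y = true) ∧ x ≠ y) := by
    intro x y
    rw [hS', Finset.mem_filter, Finset.mk_mem_sym2_iff]
    simp only [hSfin, Finset.mem_filter, SimpleGraph.mem_neighborFinset,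
      Sym2.mk_isDiag_iff]
    tauto
  have hsub : G.edgeFinset.filter
      (fun e => edgeAllTrue v e = true ∧ bothNbr G a e = true) ⊆ S' := by
    intro e
    induction e using Sym2.ind with
    | _ x y =>
      simp only [Finset.mem_filter]
      simp only [Finset.mem_filter, SimpleGraph.mem_edgeFinset, SimpleGraph.mem_edgeSet,
        bothNbr_mk, edgeAllTrue, Sym2.lift_mk, Bool.and_eq_true]
      rintro ⟨hadj, ⟨hx, hy⟩, hax, hay⟩
      rw [hmem]
      exact ⟨⟨hax, hx⟩, ⟨hay, hy⟩, G.ne_of_adj hadj⟩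
  have hcomp : (localComp G a).edgeFinset.filter
        (fun e => edgeAllTrue v e = true ∧ bothNbr G a e = true)
      = S' \ G.edgeFinset.filter
          (fun e => edgeAllTrue v e = true ∧ bothNbr G a e = true) := by
    ext e
    induction e using Sym2.ind with
    | _ x y =>
      rw [Finset.mem_sdiff, hmem]
      simp only [Finset.mem_filter]
      simp only [Finset.mem_filter, SimpleGraph.mem_edgeFinset, SimpleGraph.mem_edgeSet,
        bothNbr_mk, edgeAllTrue, Sym2.lift_mk, Bool.and_eq_true]
      constructor
      · rintro ⟨⟨hne, h⟩, ⟨hx, hy⟩, hax, hay⟩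
        rcases h with ⟨_, hnadj⟩ | ⟨hnb, _⟩
        · exact ⟨⟨⟨hax, hx⟩, ⟨hay, hy⟩, hne⟩, fun hb => hnadj hb.1⟩
        · exact absurd ⟨hax, hay⟩ hnb
      · rintro ⟨⟨⟨hax, hx⟩, ⟨hay, hy⟩, hne⟩, hnG⟩
        have hnadj : ¬ G.Adj x y := fun hadj => hnG ⟨hadj, ⟨hx, hy⟩, hax, hay⟩
        exact ⟨⟨hne, Or.inl ⟨⟨hax, hay⟩, hnadj⟩⟩, ⟨hx, hy⟩, hax, hay⟩
  have hdiag : Sfin.sym2.filter (fun e => e.IsDiag) = Sfin.image Sym2.diag := by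
    ext e
    induction e using Sym2.ind with
    | _ x y =>
      simp only [Finset.mem_filter, Finset.mk_mem_sym2_iff, Sym2.mk_isDiag_iff,
        Finset.mem_image]
      constructor
      · rintro ⟨⟨hx, hy⟩, rfl⟩
        exact ⟨x, hx, rfl⟩
      · rintro ⟨b, hb, he⟩
        have hbb : s(b,b) = s(x,y) := he
        rw [Sym2.eq_iff] at hbb
        rcases hbb with ⟨rfl, rfl⟩ | ⟨rfl, rfl⟩ <;> exact ⟨⟨hb, hb⟩, rfl⟩
  have hcardS' : S'.card = (knum G a v).choose 2 := by
    have h1 := Finset.card_filter_add_card_filter_not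
      (s := Sfin.sym2) (fun e : Sym2 (Fin n) => e.IsDiag)
    rw [hdiag, Finset.card_image_of_injective _ Sym2.diag_injective,
      Finset.card_sym2] at h1
    have h3 : (Sfin.card + 1).choose 2 = Sfin.card.choose 1 + Sfin.card.choose 2 :=
      Nat.choose_succ_succ _ 1
    rw [Nat.choose_one_right] at h3
    have hkc : Sfin.card = knum G a v := rfl
    rw [← hS'] at h1
    rw [← hkc]
    omega
  have hsplit1 : mG (localComp G a) v =
      ((localComp G a).edgeFinset.filter
        (fun e => edgeAllTrue v e = true ∧ bothNbr G a e = true)).card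
      + ((localComp G a).edgeFinset.filter
        (fun e => edgeAllTrue v e = true ∧ ¬ bothNbr G a e = true)).card := by
    unfold mG
    rw [← Finset.filter_filter, ← Finset.filter_filter]
    exact (Finset.card_filter_add_card_filter_not
      (fun e => bothNbr G a e = true)).symm
  have hsplit2 : mG G v =
      (G.edgeFinset.filter
        (fun e => edgeAllTrue v e = true ∧ bothNbr G a e = true)).card
      + (G.edgeFinset.filter
        (fun e => edgeAllTrue v e = true ∧ ¬ bothNbr G a e = true)).card := by
    unfold mG
    rw [← Finset.filter_filter, ← Finset.filter_filter]
    exact (Finset.card_filter_add_card_filter_not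
      (fun e => bothNbr G a e = true)).symm
  have hsd := Finset.card_sdiff_add_card_eq_card hsub
  have hsum : mG (localComp G a) v + mG G v
      = (knum G a v).choose 2
        + 2 * (G.edgeFinset.filter
            (fun e => edgeAllTrue v e = true ∧ ¬ bothNbr G a e = true)).card := by
    rw [hsplit1, hsplit2, notP_part_eq, hcomp]
    omega
  have h2 : (-1:ℂ)^(mG G v) * (-1:ℂ)^(mG G v) = 1 := by rw [← mul_pow]; norm_num
  have h3 : (-1:ℂ)^(mG (localComp G a) v) * (-1:ℂ)^(mG G v)
      = (-1:ℂ)^((knum G a v).choose 2) := by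
    rw [← pow_add, hsum, pow_add, pow_mul]
    norm_num
  calc (-1:ℂ)^(mG (localComp G a) v)
      = (-1:ℂ)^(mG (localComp G a) v) * ((-1:ℂ)^(mG G v) * (-1:ℂ)^(mG G v)) := by
        rw [h2, mul_one]
    _ = ((-1:ℂ)^(mG (localComp G a) v) * (-1:ℂ)^(mG G v)) * (-1:ℂ)^(mG G v) := by ring
    _ = _ := by rw [h3]; ring
end Aux6
section Aux7
open Finset
variable {n : ℕ}

lemma conj_omega : (starRingEnd ℂ) (invSqrtTwo * (1 + Complex.I))
    = invSqrtTwo * (1 - Complex.I) := by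
  unfold invSqrtTwo
  rw [map_mul, Complex.conj_ofReal, map_add, map_one, Complex.conj_I]
  ring

lemma abs_omega : ‖invSqrtTwo * (1 + Complex.I)‖ = 1 := by
  have h := congrArg norm omega_inv
  rw [norm_mul, ← conj_omega, Complex.norm_conj, norm_one] at h
  nlinarith [norm_nonneg (invSqrtTwo * (1 + Complex.I))]

lemma abs_omega' : ‖invSqrtTwo * (1 - Complex.I)‖ = 1 := by
  rw [← conj_omega, Complex.norm_conj, abs_omega]
end Aux7
/-- Local complementation acts by local Clifford unitaries on
graph states: `ψ_{τ_a(G)} = c • U_a ψ_G` for some unit-modulus `c`. -/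
theorem localComplement_graphState {n : ℕ} (G : SimpleGraph (Fin n))
    [DecidableRel G.Adj] (a : Fin n) :
    ∃ c : ℂ, ‖c‖ = 1 ∧
      graphState (localComp G a) = c • (Ua G a (graphState G)) := by
  classical
  refine ⟨(invSqrtTwo * (1 - Complex.I))^(G.degree a) * (invSqrtTwo * (1 + Complex.I)),
    ?_, ?_⟩
  · rw [norm_mul, norm_pow, abs_omega, abs_omega', one_pow, one_mul]
  · funext v
    have hE : ePlus n (Function.update v a (!(v a))) = ePlus n v := rfl
    rw [Pi.smul_apply, smul_eq_mul, Ua_apply, graphState_apply, graphState_apply,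
      graphState_apply, mG_update_parity, knum_update, mG_localComp_parity, hE]
    have hd : (invSqrtTwo * (1 - Complex.I))^(G.degree a)
        * (invSqrtTwo * (1 + Complex.I))^(G.degree a) = 1 := by
      rw [← mul_pow, omega_inv, one_pow]
    have sc := scalar_id (knum G a v)
    linear_combination
      (-( (-1:ℂ)^(mG G v) * ePlus n v * (invSqrtTwo * (1 - Complex.I))^(G.degree a)
          * (invSqrtTwo * (1 + Complex.I))^(G.degree a))) * sc
      + (-( (-1:ℂ)^(mG G v) * ePlus n v
          * (-1:ℂ)^((knum G a v).choose 2))) * hd
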